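/- Let S₁, S₂, S₄ be nonempty pairwise disjoint finite index sets with positive weights wₖ and positive reals bₖ for k ∈ S₁ ∪ S₂ ∪ S₄. Suppose Σ_{k∈S₁} wₖ bₖ + Σ_{k∈S₂} wₖ bₖ = Σ_{k∈S₄} wₖ bₖ. Then D := −Σ_{k∈S₁} wₖ bₖ² + Σ_{k∈S₂} wₖ bₖ² + Σ_{k∈S₄} wₖ bₖ² satisfies D > (Σ_{k∈S₁} wₖ bₖ)² · (1/Σ_{k∈S₄} wₖ − 1/min_{k∈S₁} wₖ). -/

import Mathlib

/-!
On `S₁` every weight is at least `m = min_{S₁} w`, so `∑_{S₁} w b² ≤ ∑_{S₁} (w b)² / m ≤ A² / m`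
with `A = ∑_{S₁} w b`. On `S₄`, Cauchy–Schwarz gives `∑_{S₄} w b² ≥ (∑_{S₄} w b)² / ∑_{S₄} w`,
and `∑_{S₄} w b = A + ∑_{S₂} w b ≥ A`. The `S₂` term of `D` is strictly positive, which makes
the bound strict.
-/

namespace Finset

variable {ι 𝕜 : Type*} [Field 𝕜] [LinearOrder 𝕜] [IsStrictOrderedRing 𝕜]
  {s : Finset ι} {w b : ι → 𝕜}

theorem sum_mul_sq_le_sq_sum_mul_div_inf' (hs : s.Nonempty) (hw : ∀ i ∈ s, 0 < w i)
    (hb : ∀ i ∈ s, 0 ≤ b i) :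
    ∑ i ∈ s, w i * b i ^ 2 ≤ (∑ i ∈ s, w i * b i) ^ 2 / s.inf' hs w := by
  have hm : 0 < s.inf' hs w := (lt_inf'_iff hs).2 hw
  calc ∑ i ∈ s, w i * b i ^ 2 ≤ ∑ i ∈ s, (w i * b i) ^ 2 / s.inf' hs w := by
        refine sum_le_sum fun i hi => (le_div_iff₀ hm).2 ?_
        calc w i * b i ^ 2 * s.inf' hs w ≤ w i * b i ^ 2 * w i := by
              gcongr
              · exact mul_nonneg (hw i hi).le (sq_nonneg _)
              · exact inf'_le w hi
          _ = (w i * b i) ^ 2 := by ring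
    _ = (∑ i ∈ s, (w i * b i) ^ 2) / s.inf' hs w := (sum_div ..).symm
    _ ≤ (∑ i ∈ s, w i * b i) ^ 2 / s.inf' hs w := by
        gcongr
        exact sum_sq_le_sq_sum_of_nonneg fun i hi => mul_nonneg (hw i hi).le (hb i hi)

theorem sq_sum_mul_div_sum_le_sum_mul_sq (hw : ∀ i ∈ s, 0 < w i) :
    (∑ i ∈ s, w i * b i) ^ 2 / ∑ i ∈ s, w i ≤ ∑ i ∈ s, w i * b i ^ 2 := by
  refine (sq_sum_div_le_sum_sq_div s (fun i => w i * b i) hw).trans_eq (sum_congr rfl ?_)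
  intro i hi
  field_simp [(hw i hi).ne']

end Finset

theorem stmt9_general (S1 S2 S4 : Finset ℕ) (h1 : S1.Nonempty) (h2 : S2.Nonempty)
    (w b : ℕ → ℝ)
    (hw : ∀ k ∈ S1 ∪ S2 ∪ S4, 0 < w k) (hb : ∀ k ∈ S1 ∪ S2 ∪ S4, 0 < b k)
    (heq : (∑ k ∈ S1, w k * b k) + ∑ k ∈ S2, w k * b k = ∑ k ∈ S4, w k * b k)
    (D : ℝ)
    (hD : D = -(∑ k ∈ S1, w k * b k ^ 2) + (∑ k ∈ S2, w k * b k ^ 2)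
        + ∑ k ∈ S4, w k * b k ^ 2) :
    (∑ k ∈ S1, w k * b k) ^ 2 * (1 / (∑ k ∈ S4, w k) - 1 / S1.inf' h1 w) < D := by
  have hw1 : ∀ k ∈ S1, 0 < w k := fun k hk => hw k (by simp [hk])
  have hw2 : ∀ k ∈ S2, 0 < w k := fun k hk => hw k (by simp [hk])
  have hw4 : ∀ k ∈ S4, 0 < w k := fun k hk => hw k (by simp [hk])
  have hb1 : ∀ k ∈ S1, 0 ≤ b k := fun k hk => (hb k (by simp [hk])).le
  have hb2 : ∀ k ∈ S2, 0 < b k := fun k hk => hb k (by simp [hk])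
  have hA : 0 ≤ ∑ k ∈ S1, w k * b k :=
    Finset.sum_nonneg fun k hk => mul_nonneg (hw1 k hk).le (hb1 k hk)
  have hA_le : ∑ k ∈ S1, w k * b k ≤ ∑ k ∈ S4, w k * b k := by
    rw [← heq]
    exact le_add_of_nonneg_right <|
      Finset.sum_nonneg fun k hk => mul_nonneg (hw2 k hk).le (hb2 k hk).le
  have hS2 : 0 < ∑ k ∈ S2, w k * b k ^ 2 :=
    Finset.sum_pos (fun k hk => mul_pos (hw2 k hk) (pow_pos (hb2 k hk) 2)) h2
  calc (∑ k ∈ S1, w k * b k) ^ 2 * (1 / (∑ k ∈ S4, w k) - 1 / S1.inf' h1 w)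
      = (∑ k ∈ S1, w k * b k) ^ 2 / ∑ k ∈ S4, w k
          - (∑ k ∈ S1, w k * b k) ^ 2 / S1.inf' h1 w := by ring
    _ ≤ (∑ k ∈ S4, w k * b k) ^ 2 / ∑ k ∈ S4, w k - ∑ k ∈ S1, w k * b k ^ 2 := by
        gcongr
        · exact Finset.sum_nonneg fun k hk => (hw4 k hk).le
        · exact Finset.sum_mul_sq_le_sq_sum_mul_div_inf' h1 hw1 hb1
    _ ≤ ∑ k ∈ S4, w k * b k ^ 2 - ∑ k ∈ S1, w k * b k ^ 2 := by
        gcongr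
        exact Finset.sq_sum_mul_div_sum_le_sum_mul_sq hw4
    _ < D := by rw [hD]; linarith

/-- Strict lower bound on D with three index sets S₁, S₂, S₄. -/
theorem stmt9 (S1 S2 S4 : Finset ℕ) (h1 : S1.Nonempty) (h2 : S2.Nonempty)
    (h4 : S4.Nonempty) (hd12 : Disjoint S1 S2) (hd14 : Disjoint S1 S4)
    (hd24 : Disjoint S2 S4) (w b : ℕ → ℝ)
    (hw : ∀ k ∈ S1 ∪ S2 ∪ S4, 0 < w k) (hb : ∀ k ∈ S1 ∪ S2 ∪ S4, 0 < b k)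
    (heq : (∑ k ∈ S1, w k * b k) + ∑ k ∈ S2, w k * b k = ∑ k ∈ S4, w k * b k)
    (D : ℝ)
    (hD : D = -(∑ k ∈ S1, w k * b k ^ 2) + (∑ k ∈ S2, w k * b k ^ 2)
        + ∑ k ∈ S4, w k * b k ^ 2) :
    (∑ k ∈ S1, w k * b k) ^ 2 * (1 / (∑ k ∈ S4, w k) - 1 / S1.inf' h1 w) < D :=
  stmt9_general S1 S2 S4 h1 h2 w b hw hb heq D hD
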